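/- Let k \geq 3, n - k \geq 1, and G = L_c(S(CS_{k,n-k})). Then the first Zagreb index of G is M_1(G) = n^3 + (11-3k)n^2 + (3k^2 - 22k + 40)n - k^3 + 11k^2 - 32k + 14. -/

import Mathlib

open scoped Classical
open Finset

noncomputable section

namespace Zagreb

variable {V : Type*}

/-- First Zagreb index. -/
def M1 (G : SimpleGraph V) [Fintype V] : ℕ :=
  ∑ v, (G.degree v) ^ 2

/-- Second Zagreb index. -/
def M2 (G : SimpleGraph V) [Fintype V] : ℕ :=
  ∑ e ∈ G.edgeFinset,
    Sym2.lift ⟨fun u v => G.degree u * G.degree v, fun _ _ => mul_comm _ _⟩ e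

/-- First Zagreb coindex: sum over unordered pairs of distinct non-adjacent vertices. -/
def M1bar (G : SimpleGraph V) [Fintype V] : ℕ :=
  ∑ e ∈ Gᶜ.edgeFinset,
    Sym2.lift ⟨fun u v => G.degree u + G.degree v, fun _ _ => add_comm _ _⟩ e

/-- Second Zagreb coindex. -/
def M2bar (G : SimpleGraph V) [Fintype V] : ℕ :=
  ∑ e ∈ Gᶜ.edgeFinset,
    Sym2.lift ⟨fun u v => G.degree u * G.degree v, fun _ _ => mul_comm _ _⟩ e

/-- The cycle-star graph: a cycle of length `k` together with `l` leaves
attached to the cycle vertex `0`. -/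
def cycleStar (k l : ℕ) : SimpleGraph (Fin k ⊕ Fin l) where
  Adj x y :=
    match x, y with
    | Sum.inl i, Sum.inl j => i ≠ j ∧ ((i.val + 1) % k = j.val ∨ (j.val + 1) % k = i.val)
    | Sum.inl i, Sum.inr _ => i.val = 0
    | Sum.inr _, Sum.inl i => i.val = 0
    | Sum.inr _, Sum.inr _ => False
  symm := ⟨by
    rintro (i | a) (j | b) h
    · exact ⟨Ne.symm h.1, h.2.symm⟩
    · exact h
    · exact h
    · exact h
    ⟩
  loopless := ⟨by
    rintro (i | a) h
    · exact h.1 rfl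
    · exact h
    ⟩

/-- The subdivision graph: each edge is replaced by a path of length 2. -/
def subdivision (G : SimpleGraph V) : SimpleGraph (V ⊕ G.edgeSet) where
  Adj x y :=
    match x, y with
    | Sum.inl v, Sum.inr e => v ∈ (e : Sym2 V)
    | Sum.inr e, Sum.inl v => v ∈ (e : Sym2 V)
    | _, _ => False
  symm := ⟨by rintro (v | e) (w | f) h <;> simp_all⟩
  loopless := ⟨by rintro (v | e) h <;> simp_all⟩

/-- The line graph of `G`. -/
def lineGraph (G : SimpleGraph V) : SimpleGraph G.edgeSet where
  Adj e f := e ≠ f ∧ ∃ v, v ∈ (e : Sym2 V) ∧ v ∈ (f : Sym2 V)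
  symm := ⟨by
    rintro e f ⟨hne, v, hv1, hv2⟩
    exact ⟨hne.symm, v, hv2, hv1⟩⟩
  loopless := ⟨by rintro e ⟨hne, _⟩; exact hne rfl⟩

/-- A cut-vertex: a vertex of a connected graph whose removal disconnects it. -/
def IsCutVertex (G : SimpleGraph V) (v : V) : Prop :=
  G.Connected ∧ ¬ (G.induce {u | u ≠ v}).Connected

/-- The line cut-vertex graph of `G`: vertices are the edges and cut-vertices of `G`;
two vertices are adjacent iff the corresponding edges share an endpoint, or one is
an edge incident to the other, a cut-vertex. -/
def lineCutGraph (G : SimpleGraph V) :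
    SimpleGraph (G.edgeSet ⊕ {v : V // IsCutVertex G v}) where
  Adj x y :=
    match x, y with
    | Sum.inl e, Sum.inl f => e ≠ f ∧ ∃ v, v ∈ (e : Sym2 V) ∧ v ∈ (f : Sym2 V)
    | Sum.inl e, Sum.inr c => (c : V) ∈ (e : Sym2 V)
    | Sum.inr c, Sum.inl e => (c : V) ∈ (e : Sym2 V)
    | Sum.inr _, Sum.inr _ => False
  symm := ⟨by
    rintro (e | c) (f | d) h
    · exact ⟨Ne.symm h.1, h.2.choose, h.2.choose_spec.2, h.2.choose_spec.1⟩
    · exact h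
    · exact h
    · exact h
    ⟩
  loopless := ⟨by
    rintro (e | c) h
    · exact h.1 rfl
    · exact h
    ⟩

end Zagreb

/-!
The edges of the subdivision `S(G)` are the darts `(v, e)` of `G`. In the line cut-vertex graph
of `S(G)` the edge `(v, e)` has degree `deg_G v + [v is a cut vertex] + [e is a cut vertex]`,
since `v` has `deg_G v - 1` further edges and `e` one, and a cut vertex `c` keeps its degree in
`S(G)`. For `G = CS_{k,l}` the cut vertices of `S(G)` are the hub and the `l` subdivision vertices
of the pendant edges: after deleting any other vertex, every vertex still reaches the hub, going
around the subdivided cycle in one direction or the other, or along a pendant path.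
Summing the squared degrees over the `2n` darts and the `l + 1` cut vertices gives
`2 (l + 3)^2 + 8 (k - 1) + l ((l + 4)^2 + 4) + (l + 2)^2 + 4 l` with `l = n - k`.
-/

namespace SimpleGraph

variable {V : Type*} (G : SimpleGraph V)

theorem degree_eq_sum_adj [Fintype V] (v : V) :
    G.degree v = ∑ u, if G.Adj v u then 1 else 0 := by
  rw [← card_neighborFinset_eq_degree, neighborFinset_eq_filter, Finset.card_filter]

theorem degree_eq_sum_edgeSet [Fintype V] (v : V) :
    G.degree v = ∑ e : G.edgeSet, if v ∈ (e : Sym2 V) then 1 else 0 := by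
  rw [← card_incidenceFinset_eq_degree, incidenceFinset_eq_filter, Finset.card_filter,
    Finset.sum_subtype _ (fun _ => mem_edgeFinset)]

theorem degree_eq_sum_dart [Fintype V] [DecidableEq V] (v : V) :
    G.degree v = ∑ d : G.Dart, if d.fst = v then 1 else 0 := by
  rw [← dart_fst_fiber_card_eq_degree, Finset.card_filter]

theorem exists_dart_fst_eq_of_mem {v : V} {e : G.edgeSet} (hv : v ∈ (e : Sym2 V)) :
    ∃ d : G.Dart, d.fst = v ∧ (⟨d.edge, d.edge_mem⟩ : G.edgeSet) = e := by
  refine ⟨⟨(v, Sym2.Mem.other hv), ?_⟩, rfl, Subtype.ext (Sym2.other_spec hv)⟩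
  rw [← mem_edgeSet, Sym2.other_spec hv]
  exact e.2

theorem induce_reachable_of_adj_succ {A : Set V} {f : ℕ → V}
    (hf : ∀ n, G.Adj (f n) (f (n + 1))) {a b : ℕ} (hab : a ≤ b)
    (hA : ∀ n, a ≤ n → n ≤ b → f n ∈ A) :
    (G.induce A).Reachable ⟨f a, hA a le_rfl hab⟩ ⟨f b, hA b hab le_rfl⟩ := by
  obtain ⟨d, rfl⟩ := Nat.exists_eq_add_of_le hab
  induction d with
  | zero => rfl
  | succ d ih =>
    have hstep : (G.induce A).Adj ⟨f (a + d), hA _ (by omega) (by omega)⟩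
        ⟨f (a + d + 1), hA _ (by omega) le_rfl⟩ := hf (a + d)
    exact (ih (by omega) fun n h₁ h₂ => hA n h₁ (by omega)).trans hstep.reachable

theorem not_connected_induce_of_closed {A B : Set V}
    (hB : ∀ x ∈ B, ∀ y ∈ A, G.Adj x y → y ∈ B) {u v : V} (hu : u ∈ A) (huB : u ∈ B)
    (hv : v ∈ A) (hvB : v ∉ B) :
    ¬ (G.induce A).Connected := by
  intro h
  obtain ⟨w⟩ := h.preconnected ⟨u, hu⟩ ⟨v, hv⟩
  obtain ⟨d, -, hfst, hsnd⟩ := w.exists_boundary_dart {x | x.1 ∈ B} huB hvB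
  exact hsnd (hB _ hfst _ d.snd.2 d.adj)

end SimpleGraph

theorem Fin.add_one_add_one_ne_self {m : ℕ} (i : Fin (m + 3)) : i + 1 + 1 ≠ i := by
  rw [add_assoc, Ne, add_eq_left, Fin.ext_iff, Fin.val_add, Fin.val_one, Fin.val_zero,
    Nat.mod_eq_of_lt (by omega)]
  omega

namespace Zagreb

open SimpleGraph

section LineCut

variable {V : Type*} (H : SimpleGraph V)

@[simp]
theorem lineCutGraph_adj_inl_inl {e f : H.edgeSet} :
    (lineCutGraph H).Adj (.inl e) (.inl f) ↔
      e ≠ f ∧ ∃ v, v ∈ (e : Sym2 V) ∧ v ∈ (f : Sym2 V) := Iff.rfl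

@[simp]
theorem lineCutGraph_adj_inl_inr {e : H.edgeSet} {c : {v : V // IsCutVertex H v}} :
    (lineCutGraph H).Adj (.inl e) (.inr c) ↔ (c : V) ∈ (e : Sym2 V) := Iff.rfl

@[simp]
theorem lineCutGraph_adj_inr_inl {e : H.edgeSet} {c : {v : V // IsCutVertex H v}} :
    (lineCutGraph H).Adj (.inr c) (.inl e) ↔ (c : V) ∈ (e : Sym2 V) := Iff.rfl

@[simp]
theorem lineCutGraph_not_adj_inr_inr {c d : {v : V // IsCutVertex H v}} :
    ¬ (lineCutGraph H).Adj (.inr c) (.inr d) := id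

theorem lineCutGraph_degree_inr [Fintype V] (c : {v : V // IsCutVertex H v}) :
    (lineCutGraph H).degree (.inr c) = H.degree c := by
  rw [degree_eq_sum_adj, Fintype.sum_sum_type, degree_eq_sum_edgeSet]
  simp only [lineCutGraph_adj_inr_inl, lineCutGraph_not_adj_inr_inr, if_false,
    Finset.sum_const_zero, add_zero]

theorem sum_cutVertex_mem [Fintype V] {x y : V} (hxy : x ≠ y) :
    (∑ c : {v : V // IsCutVertex H v}, if (c : V) ∈ s(x, y) then 1 else 0) =
      (if IsCutVertex H x then 1 else 0) + (if IsCutVertex H y then 1 else 0) := by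
  rw [← Finset.sum_subtype (Finset.univ.filter (IsCutVertex H)) (by simp)
    (fun v => if v ∈ s(x, y) then 1 else 0)]
  have hfilter : ({v | IsCutVertex H v ∧ v ∈ s(x, y)} : Finset V) =
      ({x, y} : Finset V).filter (IsCutVertex H) := by
    ext; simp [and_comm]
  rw [Finset.sum_ite, Finset.sum_const_zero, add_zero, Finset.sum_const, smul_eq_mul, mul_one,
    Finset.filter_filter, hfilter, Finset.filter_insert, Finset.filter_singleton]
  split_ifs <;> simp [hxy]

theorem sum_adj_lineCutGraph_inl_add_two [Fintype V] {x y : V} (hxy : H.Adj x y) :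
    (∑ f : H.edgeSet,
        if (lineCutGraph H).Adj (.inl ⟨s(x, y), hxy⟩) (.inl f) then 1 else 0) + 2 =
      H.degree x + H.degree y := by
  have htwo : 2 = ∑ f : H.edgeSet, 2 * if f = ⟨s(x, y), hxy⟩ then 1 else 0 := by simp
  rw [degree_eq_sum_edgeSet, degree_eq_sum_edgeSet, htwo, ← Finset.sum_add_distrib,
    ← Finset.sum_add_distrib]
  refine Fintype.sum_congr _ _ fun f => ?_
  by_cases hf : f = ⟨s(x, y), hxy⟩
  · subst hf
    simp
  have hboth : ¬ (x ∈ (f : Sym2 V) ∧ y ∈ (f : Sym2 V)) := fun h =>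
    hf (Subtype.ext ((Sym2.mem_and_mem_iff hxy.ne).1 h))
  have hadj : (lineCutGraph H).Adj (.inl ⟨s(x, y), hxy⟩) (.inl f) ↔
      x ∈ (f : Sym2 V) ∨ y ∈ (f : Sym2 V) := by
    simp [Ne.symm hf]
  rw [if_neg hf, if_congr hadj rfl rfl]
  by_cases x ∈ (f : Sym2 V) <;> by_cases y ∈ (f : Sym2 V) <;> simp_all

theorem lineCutGraph_degree_inl [Fintype V] {x y : V} (hxy : H.Adj x y) :
    (lineCutGraph H).degree (.inl ⟨s(x, y), hxy⟩) =
      (H.degree x - 1) + (H.degree y - 1) +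
        ((if IsCutVertex H x then 1 else 0) + (if IsCutVertex H y then 1 else 0)) := by
  rw [degree_eq_sum_adj, Fintype.sum_sum_type, ← sum_cutVertex_mem H hxy.ne]
  simp only [lineCutGraph_adj_inl_inr]
  have := sum_adj_lineCutGraph_inl_add_two H hxy
  have := hxy.degree_pos_left
  have := hxy.degree_pos_right
  omega

end LineCut

section Subdivision

variable {V : Type*} (G : SimpleGraph V)

@[simp]
theorem subdivision_adj_inl_inr {v : V} {e : G.edgeSet} :
    (subdivision G).Adj (.inl v) (.inr e) ↔ v ∈ (e : Sym2 V) := Iff.rfl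

@[simp]
theorem subdivision_adj_inr_inl {v : V} {e : G.edgeSet} :
    (subdivision G).Adj (.inr e) (.inl v) ↔ v ∈ (e : Sym2 V) := Iff.rfl

@[simp]
theorem subdivision_not_adj_inl_inl {v w : V} : ¬ (subdivision G).Adj (.inl v) (.inl w) := id

@[simp]
theorem subdivision_not_adj_inr_inr {e f : G.edgeSet} :
    ¬ (subdivision G).Adj (.inr e) (.inr f) := id

theorem subdivision_degree_inl [Fintype V] (v : V) :
    (subdivision G).degree (.inl v) = G.degree v := by
  rw [degree_eq_sum_adj, Fintype.sum_sum_type, degree_eq_sum_edgeSet]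
  simp only [subdivision_not_adj_inl_inl, subdivision_adj_inl_inr, if_false,
    Finset.sum_const_zero, zero_add]

theorem subdivision_degree_inr [Fintype V] (e : G.edgeSet) :
    (subdivision G).degree (.inr e) = 2 := by
  obtain ⟨e, he⟩ := e
  induction e using Sym2.ind with
  | _ x y =>
    rw [degree_eq_sum_adj, Fintype.sum_sum_type]
    simp only [subdivision_adj_inr_inl, subdivision_not_adj_inr_inr, if_false,
      Finset.sum_const_zero, add_zero, Sym2.mem_iff]
    rw [Finset.sum_ite, Finset.sum_const_zero, add_zero, Finset.sum_const, smul_eq_mul, mul_one]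
    have hpair : ({a | a = x ∨ a = y} : Finset V) = {x, y} := by ext; simp
    rw [hpair, Finset.card_pair (G.ne_of_adj he)]

def dartEquivSubdivisionEdgeSet : G.Dart ≃ (subdivision G).edgeSet :=
  Equiv.ofBijective
    (fun d => ⟨s(.inl d.fst, .inr ⟨d.edge, d.edge_mem⟩), Sym2.mem_mk_left _ _⟩)
    (by
      constructor
      · intro d d' h
        obtain ⟨hfst, hedge⟩ : d.fst = d'.fst ∧ d.edge = d'.edge := by
          have h' := congrArg Subtype.val h
          simpa [Sym2.eq_iff] using h'
        rcases (dart_edge_eq_iff d d').1 hedge with rfl | rfl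
        · rfl
        · exact absurd hfst.symm d'.adj.ne
      · rintro ⟨z, hz⟩
        induction z using Sym2.ind with
        | _ x y =>
          rw [mem_edgeSet] at hz
          rcases x with v | e <;> rcases y with w | f
          · exact absurd hz (subdivision_not_adj_inl_inl G)
          · obtain ⟨d, rfl, rfl⟩ := exists_dart_fst_eq_of_mem G (e := f) hz
            exact ⟨d, rfl⟩
          · obtain ⟨d, rfl, rfl⟩ := exists_dart_fst_eq_of_mem G hz
            exact ⟨d, Subtype.ext Sym2.eq_swap⟩
          · exact absurd hz (subdivision_not_adj_inr_inr G))

end Subdivision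

theorem M1_lineCutGraph_subdivision {V : Type*} [Fintype V] (G : SimpleGraph V) :
    M1 (lineCutGraph (subdivision G)) =
      ∑ d : G.Dart, (G.degree d.fst
        + (if IsCutVertex (subdivision G) (.inl d.fst) then 1 else 0)
        + (if IsCutVertex (subdivision G) (.inr ⟨d.edge, d.edge_mem⟩) then 1 else 0)) ^ 2
      + ∑ c : {x // IsCutVertex (subdivision G) x}, (subdivision G).degree c ^ 2 := by
  rw [M1, Fintype.sum_sum_type, ← (dartEquivSubdivisionEdgeSet G).sum_comp]
  congr 1
  · refine Fintype.sum_congr _ _ fun d => ?_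
    have hd := d.adj.degree_pos_left
    rw [show dartEquivSubdivisionEdgeSet G d =
        ⟨_, (subdivision_adj_inl_inr G).2 (Sym2.mem_mk_left _ _)⟩ from rfl,
      lineCutGraph_degree_inl, subdivision_degree_inl, subdivision_degree_inr]
    congr 1
    omega
  · simp only [lineCutGraph_degree_inr]

section CycleStar

/- The cycle has length `m + 3`, so that `Fin (m + 3)` is a ring in which `i`, `i + 1` and
`i + 2` are distinct. -/
variable {m l : ℕ}

theorem cycleStar_adj_inl_inl {i j : Fin (m + 3)} :
    (cycleStar (m + 3) l).Adj (.inl i) (.inl j) ↔ j = i + 1 ∨ i = j + 1 := by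
  have hsucc : ∀ i j : Fin (m + 3), (i.val + 1) % (m + 3) = j.val ↔ i + 1 = j := fun i j => by
    rw [Fin.ext_iff, Fin.val_add, Fin.val_one]
  show _ ∧ _ ↔ _
  rw [hsucc, hsucc]
  constructor
  · rintro ⟨-, h | h⟩
    exacts [Or.inl h.symm, Or.inr h.symm]
  · rintro (rfl | rfl)
    · exact ⟨by simp, Or.inl rfl⟩
    · exact ⟨by simp, Or.inr rfl⟩

@[simp]
theorem cycleStar_adj_inl_inr {i : Fin (m + 3)} {a : Fin l} :
    (cycleStar (m + 3) l).Adj (.inl i) (.inr a) ↔ i = 0 :=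
  (Fin.ext_iff (a := i) (b := 0)).symm

@[simp]
theorem cycleStar_adj_inr_inl {i : Fin (m + 3)} {a : Fin l} :
    (cycleStar (m + 3) l).Adj (.inr a) (.inl i) ↔ i = 0 :=
  (Fin.ext_iff (a := i) (b := 0)).symm

@[simp]
theorem cycleStar_not_adj_inr_inr {a b : Fin l} : ¬ (cycleStar (m + 3) l).Adj (.inr a) (.inr b) :=
  id

/-- `(inl i, false)` runs along the cycle from `i` to `i + 1`, `(inr a, false)` from the hub `0`
to the leaf `a`; `true` reverses the direction. -/
def cycleStarDart : (Fin (m + 3) ⊕ Fin l) × Bool → (cycleStar (m + 3) l).Dart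
  | (.inl i, false) => ⟨(.inl i, .inl (i + 1)), cycleStar_adj_inl_inl.2 (Or.inl rfl)⟩
  | (.inl i, true) => ⟨(.inl (i + 1), .inl i), cycleStar_adj_inl_inl.2 (Or.inr rfl)⟩
  | (.inr a, false) => ⟨(.inl 0, .inr a), cycleStar_adj_inl_inr.2 rfl⟩
  | (.inr a, true) => ⟨(.inr a, .inl 0), cycleStar_adj_inr_inl.2 rfl⟩

theorem cycleStarDart_bijective : Function.Bijective (cycleStarDart (m := m) (l := l)) := by
  constructor
  · rintro ⟨i | a, _ | _⟩ ⟨j | b, _ | _⟩ h <;>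
      simp only [cycleStarDart, SimpleGraph.Dart.ext_iff, Prod.mk.injEq, Sum.inl.injEq,
        Sum.inr.injEq, reduceCtorEq, and_false, false_and, and_true, true_and] at h
    · rw [h.1]
    · obtain ⟨rfl, h⟩ := h
      exact absurd h (Fin.add_one_add_one_ne_self j)
    · obtain ⟨rfl, h⟩ := h
      exact absurd h.symm (Fin.add_one_add_one_ne_self i)
    · rw [h.2]
    · rw [h]
    · rw [h]
  · rintro ⟨⟨i | a, j | b⟩, h⟩
    · rcases cycleStar_adj_inl_inl.1 h with rfl | rfl
      exacts [⟨(.inl i, false), rfl⟩, ⟨(.inl j, true), rfl⟩]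
    · obtain rfl := cycleStar_adj_inl_inr.1 h
      exact ⟨(.inr b, false), rfl⟩
    · obtain rfl := cycleStar_adj_inr_inl.1 h
      exact ⟨(.inr a, true), rfl⟩
    · exact absurd h cycleStar_not_adj_inr_inr

theorem cycleStar_degree_inl (i : Fin (m + 3)) :
    (cycleStar (m + 3) l).degree (.inl i) = 2 + if i = 0 then l else 0 := by
  rw [degree_eq_sum_dart, ← cycleStarDart_bijective.sum_comp, Fintype.sum_prod_type,
    Fintype.sum_sum_type]
  simp [cycleStarDart, ← eq_sub_iff_add_eq, Finset.sum_add_distrib, eq_comm (a := (0 : Fin _))]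

theorem cycleStar_degree_inr (a : Fin l) : (cycleStar (m + 3) l).degree (.inr a) = 1 := by
  rw [degree_eq_sum_dart, ← cycleStarDart_bijective.sum_comp, Fintype.sum_prod_type,
    Fintype.sum_sum_type]
  simp [cycleStarDart]

theorem cycleStarDart_symm (p : Fin (m + 3) ⊕ Fin l) :
    (cycleStarDart (p, false)).symm = cycleStarDart (p, true) := by
  rcases p with i | a <;> rfl

def cycleStarEdge (p : Fin (m + 3) ⊕ Fin l) : (cycleStar (m + 3) l).edgeSet :=
  ⟨(cycleStarDart (p, false)).edge, (cycleStarDart (p, false)).edge_mem⟩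

@[simp]
theorem mem_cycleStarEdge_inl {v : Fin (m + 3) ⊕ Fin l} {i : Fin (m + 3)} :
    v ∈ (cycleStarEdge (.inl i : Fin (m + 3) ⊕ Fin l) : Sym2 (Fin (m + 3) ⊕ Fin l)) ↔
      v = .inl i ∨ v = .inl (i + 1) :=
  Sym2.mem_iff

@[simp]
theorem mem_cycleStarEdge_inr {v : Fin (m + 3) ⊕ Fin l} {a : Fin l} :
    v ∈ (cycleStarEdge (.inr a : Fin (m + 3) ⊕ Fin l) : Sym2 (Fin (m + 3) ⊕ Fin l)) ↔
      v = .inl 0 ∨ v = .inr a :=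
  Sym2.mem_iff

theorem cycleStarDart_edge (p : Fin (m + 3) ⊕ Fin l) (b : Bool) :
    (⟨(cycleStarDart (p, b)).edge, (cycleStarDart (p, b)).edge_mem⟩ :
      (cycleStar (m + 3) l).edgeSet) = cycleStarEdge p := by
  cases b
  · rfl
  · rw [← cycleStarDart_symm]
    exact Subtype.ext (SimpleGraph.Dart.edge_symm _)

theorem cycleStarEdge_injective : Function.Injective (cycleStarEdge (m := m) (l := l)) := by
  intro p q h
  rcases (SimpleGraph.dart_edge_eq_iff _ _).1 (congrArg Subtype.val h) with h | h
  · exact congrArg Prod.fst (cycleStarDart_bijective.1 h)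
  · rw [cycleStarDart_symm] at h
    exact congrArg Prod.fst (cycleStarDart_bijective.1 h)

theorem exists_eq_cycleStarEdge (e : (cycleStar (m + 3) l).edgeSet) :
    ∃ p, e = cycleStarEdge p := by
  obtain ⟨z, hz⟩ := e
  induction z using Sym2.ind with
  | _ x y =>
    obtain ⟨⟨p, b⟩, hd⟩ := cycleStarDart_bijective.2 ⟨(x, y), hz⟩
    exact ⟨p, by rw [← cycleStarDart_edge p b, hd]; rfl⟩

/-- The subdivided cycle traversed from the hub: even steps are the cycle vertices, odd steps
the subdivision vertices of the cycle edges. -/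
def cycleWalk (p : ℕ) : (Fin (m + 3) ⊕ Fin l) ⊕ (cycleStar (m + 3) l).edgeSet :=
  if p % 2 = 0 then .inl (.inl (Fin.ofNat _ (p / 2)))
  else .inr (cycleStarEdge (.inl (Fin.ofNat _ (p / 2))))

theorem cycleWalk_two_mul (i : ℕ) :
    cycleWalk (m := m) (l := l) (2 * i) = .inl (.inl (Fin.ofNat _ i)) := by
  simp [cycleWalk]

theorem cycleWalk_two_mul_add_one (i : ℕ) :
    cycleWalk (m := m) (l := l) (2 * i + 1) = .inr (cycleStarEdge (.inl (Fin.ofNat _ i))) := by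
  simp [cycleWalk, Nat.add_mod, Nat.add_div]

theorem cycleWalk_zero : cycleWalk (m := m) (l := l) 0 = .inl (.inl 0) := by
  simpa using cycleWalk_two_mul (m := m) (l := l) 0

theorem cycleWalk_period : cycleWalk (m := m) (l := l) (2 * (m + 3)) = .inl (.inl 0) := by
  rw [cycleWalk_two_mul]
  simp

theorem subdivision_adj_cycleWalk (p : ℕ) :
    (subdivision (cycleStar (m + 3) l)).Adj (cycleWalk p) (cycleWalk (p + 1)) := by
  obtain ⟨i, rfl | rfl⟩ := Nat.even_or_odd' p
  · rw [cycleWalk_two_mul, cycleWalk_two_mul_add_one]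
    simp
  · rw [cycleWalk_two_mul_add_one, show 2 * i + 1 + 1 = 2 * (i + 1) by ring, cycleWalk_two_mul]
    simp [Fin.ext_iff, Fin.val_add]

theorem cycleWalk_injOn {p q : ℕ} (hp : p < 2 * (m + 3)) (hq : q < 2 * (m + 3))
    (h : cycleWalk (m := m) (l := l) p = cycleWalk q) : p = q := by
  have hcast : ∀ {i j : ℕ}, i < m + 3 → j < m + 3 →
      Fin.ofNat (m + 3) i = Fin.ofNat _ j → i = j :=
    fun hi hj h => by simpa [Fin.ext_iff, Nat.mod_eq_of_lt hi, Nat.mod_eq_of_lt hj] using h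
  obtain ⟨i, rfl | rfl⟩ := Nat.even_or_odd' p <;>
    obtain ⟨j, rfl | rfl⟩ := Nat.even_or_odd' q <;>
    simp only [cycleWalk_two_mul, cycleWalk_two_mul_add_one, Sum.inl.injEq, Sum.inr.injEq,
      reduceCtorEq] at h
  · rw [hcast (by omega) (by omega) h]
  · rw [hcast (by omega) (by omega) (Sum.inl.inj (cycleStarEdge_injective h))]

theorem subdivision_cycleStar_cases
    (x : (Fin (m + 3) ⊕ Fin l) ⊕ (cycleStar (m + 3) l).edgeSet) :
    (∃ p < 2 * (m + 3), x = cycleWalk p) ∨ (∃ a, x = .inr (cycleStarEdge (.inr a))) ∨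
      ∃ a, x = .inl (.inr a) := by
  rcases x with (i | a) | e
  · exact Or.inl ⟨2 * i, by omega, by rw [cycleWalk_two_mul]; simp⟩
  · exact Or.inr (Or.inr ⟨a, rfl⟩)
  · obtain ⟨i | a, rfl⟩ := exists_eq_cycleStarEdge e
    · exact Or.inl ⟨2 * i + 1, by omega, by rw [cycleWalk_two_mul_add_one]; simp⟩
    · exact Or.inr (Or.inl ⟨a, rfl⟩)

theorem cycleWalk_ne_inl_inr (p : ℕ) (a : Fin l) : cycleWalk (m := m) p ≠ .inl (.inr a) := by
  unfold cycleWalk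
  split_ifs <;> simp

theorem cycleWalk_ne_pendant (p : ℕ) (a : Fin l) :
    cycleWalk (m := m) p ≠ .inr (cycleStarEdge (.inr a)) := by
  unfold cycleWalk
  split_ifs <;> simp [cycleStarEdge_injective.eq_iff]

theorem subdivision_cycleStar_adj_leaf {a : Fin l} {y} :
    (subdivision (cycleStar (m + 3) l)).Adj (.inl (.inr a)) y ↔
      y = .inr (cycleStarEdge (.inr a)) := by
  constructor
  · intro h
    rcases y with v | e
    · exact absurd h (subdivision_not_adj_inl_inl _)
    · obtain ⟨i | b, rfl⟩ := exists_eq_cycleStarEdge e <;> simp_all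
  · rintro rfl
    simp

theorem subdivision_cycleStar_adj_pendant {a : Fin l} {y} :
    (subdivision (cycleStar (m + 3) l)).Adj (.inr (cycleStarEdge (.inr a))) y ↔
      y = .inl (.inl 0) ∨ y = .inl (.inr a) := by
  rcases y with v | e <;> simp

theorem connected_induce_subdivision_cycleStar
    {A : Set ((Fin (m + 3) ⊕ Fin l) ⊕ (cycleStar (m + 3) l).edgeSet)} {q : ℕ} (hq : 0 < q)
    (hcyc : ∀ p < 2 * (m + 3), cycleWalk p ∈ A ↔ p ≠ q)
    (hpend : ∀ a, .inr (cycleStarEdge (.inr a)) ∈ A) :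
    ((subdivision (cycleStar (m + 3) l)).induce A).Connected := by
  have hhub : cycleWalk 0 ∈ A := (hcyc 0 (by omega)).2 hq.ne
  have hwalk : ∀ p < 2 * (m + 3), ∀ hp : cycleWalk p ∈ A,
      ((subdivision (cycleStar (m + 3) l)).induce A).Reachable ⟨_, hhub⟩ ⟨_, hp⟩ := by
    intro p hp hpA
    rcases lt_or_gt_of_ne ((hcyc p hp).1 hpA) with hlt | hgt
    · exact induce_reachable_of_adj_succ _ subdivision_adj_cycleWalk (Nat.zero_le p)
        fun n _ hn => (hcyc n (by omega)).2 (by omega)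
    · have hmem : ∀ n, p ≤ n → n ≤ 2 * (m + 3) → cycleWalk n ∈ A := by
        intro n h₁ h₂
        rcases h₂.lt_or_eq with h₂ | rfl
        · exact (hcyc n h₂).2 (by omega)
        · rwa [cycleWalk_period, ← cycleWalk_zero]
      have hback := induce_reachable_of_adj_succ _ subdivision_adj_cycleWalk hp.le hmem
      have hclose : (⟨cycleWalk (2 * (m + 3)), hmem _ hp.le le_rfl⟩ : A) = ⟨_, hhub⟩ :=
        Subtype.ext (cycleWalk_period.trans cycleWalk_zero.symm)
      exact (hclose ▸ hback).symm
  have hpendant : ∀ a, ((subdivision (cycleStar (m + 3) l)).induce A).Reachable ⟨_, hhub⟩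
      ⟨_, hpend a⟩ := fun a =>
    Adj.reachable (by
      rw [induce_adj]
      show (subdivision _).Adj (cycleWalk 0) _
      rw [cycleWalk_zero, (subdivision _).adj_comm]
      simp)
  rw [connected_iff_exists_forall_reachable]
  refine ⟨⟨_, hhub⟩, ?_⟩
  rintro ⟨x, hx⟩
  rcases subdivision_cycleStar_cases x with ⟨p, hp, rfl⟩ | ⟨a, rfl⟩ | ⟨a, rfl⟩
  · exact hwalk p hp hx
  · exact hpendant a
  · exact (hpendant a).trans (Adj.reachable (by simp))

theorem connected_subdivision_cycleStar : (subdivision (cycleStar (m + 3) l)).Connected := by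
  rw [← (induceUnivIso _).connected_iff]
  exact connected_induce_subdivision_cycleStar (q := 2 * (m + 3)) (by omega)
    (fun p hp => iff_of_true trivial hp.ne) fun _ => trivial

theorem isCutVertex_subdivision_cycleStar_iff (hl : 0 < l)
    (x : (Fin (m + 3) ⊕ Fin l) ⊕ (cycleStar (m + 3) l).edgeSet) :
    IsCutVertex (subdivision (cycleStar (m + 3) l)) x ↔
      x = .inl (.inl 0) ∨ ∃ a, x = .inr (cycleStarEdge (.inr a)) := by
  constructor
  · rintro ⟨-, hcut⟩
    rcases subdivision_cycleStar_cases x with ⟨p, hp, rfl⟩ | ⟨a, rfl⟩ | ⟨a, rfl⟩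
    · rcases Nat.eq_zero_or_pos p with rfl | hp0
      · exact Or.inl cycleWalk_zero
      refine absurd (connected_induce_subdivision_cycleStar hp0 (fun p' hp' => ?_)
        fun a => (cycleWalk_ne_pendant p a).symm) hcut
      exact ⟨fun h h' => h (h' ▸ rfl), fun h h' => h (cycleWalk_injOn hp' hp h')⟩
    · exact Or.inr ⟨a, rfl⟩
    · exact absurd (connected_induce_subdivision_cycleStar (q := 2 * (m + 3)) (by omega)
        (fun p hp => iff_of_true (cycleWalk_ne_inl_inr p a) hp.ne) fun _ => by simp) hcut
  · rintro (rfl | ⟨a, rfl⟩)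
    · refine ⟨connected_subdivision_cycleStar, not_connected_induce_of_closed _
        (B := {.inl (.inr ⟨0, hl⟩), .inr (cycleStarEdge (.inr ⟨0, hl⟩))}) ?_
        (u := .inl (.inr ⟨0, hl⟩)) (v := cycleWalk 1) (by simp) (by simp) ?_ ?_⟩
      · rintro x (rfl | rfl) y hy hxy
        · rw [subdivision_cycleStar_adj_leaf] at hxy
          simp [hxy]
        · rcases subdivision_cycleStar_adj_pendant.1 hxy with rfl | rfl
          · exact absurd rfl hy
          · simp
      · simp [cycleWalk]
      · simp [cycleWalk_ne_inl_inr, cycleWalk_ne_pendant]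
    · refine ⟨connected_subdivision_cycleStar, not_connected_induce_of_closed _
        (B := {.inl (.inr a)}) ?_ (u := .inl (.inr a)) (v := .inl (.inl 0)) (by simp) rfl
        (by simp) (by simp)⟩
      rintro x rfl y hy hxy
      exact absurd (subdivision_cycleStar_adj_leaf.1 hxy) hy

theorem sum_cutVertex_subdivision_cycleStar (hl : 0 < l)
    (f : (Fin (m + 3) ⊕ Fin l) ⊕ (cycleStar (m + 3) l).edgeSet → ℕ) :
    ∑ c : {x // IsCutVertex (subdivision (cycleStar (m + 3) l)) x}, f c =
      f (.inl (.inl 0)) + ∑ a, f (.inr (cycleStarEdge (.inr a))) := by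
  have hcut : ({x | IsCutVertex (subdivision (cycleStar (m + 3) l)) x} : Finset _) =
      insert (.inl (.inl 0)) (Finset.univ.image fun a => .inr (cycleStarEdge (.inr a))) := by
    ext x
    simp [isCutVertex_subdivision_cycleStar_iff hl, eq_comm]
  rw [← Finset.sum_subtype _ (fun x => Finset.mem_filter_univ x) f, hcut,
    Finset.sum_insert (by simp),
    Finset.sum_image fun a _ b _ h => Sum.inr.inj (cycleStarEdge_injective (Sum.inr.inj h))]

theorem M1_lineCutGraph_subdivision_cycleStar (hl : 0 < l) :
    M1 (lineCutGraph (subdivision (cycleStar (m + 3) l))) =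
      2 * ((l + 3) ^ 2 + 4 * (m + 2)) + l * ((l + 4) ^ 2 + 4) + ((l + 2) ^ 2 + 4 * l) := by
  have hdeg : ∀ v, (cycleStar (m + 3) l).degree v =
      Sum.elim (fun i => 2 + if i = 0 then l else 0) (fun _ => 1) v := by
    rintro (i | a)
    exacts [cycleStar_degree_inl i, cycleStar_degree_inr a]
  -- `hdeg` is applied before `cycleStarDart` is unfolded: the tail of a dart also occurs in the
  -- `Fintype` instance of its degree, where `simp` cannot rewrite it.
  rw [M1_lineCutGraph_subdivision]
  simp only [hdeg]
  rw [← cycleStarDart_bijective.sum_comp, Fintype.sum_prod_type, Fintype.sum_sum_type,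
    sum_cutVertex_subdivision_cycleStar hl fun c =>
      (subdivision (cycleStar (m + 3) l)).degree c ^ 2]
  simp only [Fintype.sum_bool, cycleStarDart_edge]
  simp only [cycleStarDart, Sum.elim_inl, isCutVertex_subdivision_cycleStar_iff hl, Sum.inl.injEq,
    reduceCtorEq, exists_false, or_false, Sum.inr.injEq, cycleStarEdge_injective.eq_iff, or_self,
    ↓reduceIte, add_zero, Sum.elim_inr, exists_eq', or_true, Nat.reduceAdd, Nat.reducePow,
    Finset.sum_const, Finset.card_univ, Fintype.card_fin, smul_eq_mul, subdivision_degree_inl, hdeg,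
    subdivision_degree_inr]
  rw [Finset.sum_add_distrib, Fin.sum_univ_castSucc]
  simp only [Fin.coeSucc_eq_succ, Fin.succ_ne_zero, ↓reduceIte, add_zero, Nat.reducePow,
    Finset.sum_const, Finset.card_univ, Fintype.card_fin, smul_eq_mul, Fin.last_add_one,
    Fin.sum_univ_succ]
  ring

end CycleStar

end Zagreb

open Zagreb in
theorem stmt13 (n k : ℕ) (hk : 3 ≤ k) (hn : k + 1 ≤ n) :
    (M1 (lineCutGraph (subdivision (cycleStar k (n - k)))) : ℤ) =
      (n : ℤ) ^ 3 + (11 - 3 * k) * n ^ 2 + (3 * k ^ 2 - 22 * k + 40) * n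
        - k ^ 3 + 11 * k ^ 2 - 32 * k + 14 := by
  obtain ⟨m, rfl⟩ : ∃ m, k = m + 3 := ⟨k - 3, by omega⟩
  obtain ⟨l, rfl⟩ : ∃ l, n = m + 3 + l := ⟨n - (m + 3), by omega⟩
  rw [Nat.add_sub_cancel_left, M1_lineCutGraph_subdivision_cycleStar (by omega)]
  push_cast
  ring
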